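/- Let X and Y be m-dimensional subspaces of ℝⁿ with orthogonal complements X⊥ and Y⊥. Then the nonzero canonical angles between X and Y coincide (with multiplicity) with the nonzero canonical angles between X⊥ and Y⊥. -/

import Mathlib

/-!
Write `S = Xcᵀ Y`. Since `X Xᵀ + Xc Xcᵀ = 1`, the cosine Gram matrices satisfy
`(Xᵀ Y)ᵀ (Xᵀ Y) = 1 - Sᵀ S` and `(Xcᵀ Yc) (Xcᵀ Yc)ᵀ = 1 - S Sᵀ` (`cos² = 1 - sin²`).
By Sylvester's determinant identity `1 - Sᵀ S` and `1 - S Sᵀ` have the same eigenvalues apart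
from the eigenvalue `1`, and the eigenvalues below `1` are exactly those giving nonzero angles.
-/

open Matrix Polynomial

theorem Matrix.charpoly_one_sub {R k : Type*} [CommRing R] [Fintype k] [DecidableEq k]
    (M : Matrix k k R) : (1 - M).charpoly = (-M).charpoly.comp (X - 1) := by
  have h : 1 - M = -M - scalar k (-1 : R) := by simp [sub_eq_add_neg, add_comm]
  rw [h, charpoly_sub_scalar, map_neg, map_one, sub_eq_add_neg]

theorem Matrix.charpoly_one_sub_mul_comm' {R m n : Type*} [CommRing R]
    [Fintype m] [Fintype n] [DecidableEq m] [DecidableEq n]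
    (A : Matrix m n R) (B : Matrix n m R) :
    (X - 1) ^ Fintype.card n * (1 - A * B).charpoly =
      (X - 1) ^ Fintype.card m * (1 - B * A).charpoly := by
  have h := congrArg (fun p => p.comp (X - 1)) (charpoly_mul_comm' (-A) B)
  simp only [mul_comp, pow_comp, X_comp] at h
  rw [charpoly_one_sub, charpoly_one_sub]
  simpa only [Matrix.neg_mul, Matrix.mul_neg] using h

theorem Polynomial.filter_roots_eq_of_X_sub_C_pow_mul_eq {R : Type*} [CommRing R] [IsDomain R]
    {f g : R[X]} (hf : f ≠ 0) (hg : g ≠ 0) {a : R} {p q : ℕ}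
    (h : (X - C a) ^ q * f = (X - C a) ^ p * g) (P : R → Prop) [DecidablePred P]
    (ha : ¬ P a) : f.roots.filter P = g.roots.filter P := by
  have hroots := congrArg (fun r : R[X] => (r.roots).filter P) h
  have hpow {k : ℕ} : (X - C a) ^ k ≠ 0 := pow_ne_zero _ (X_sub_C_ne_zero a)
  have hrep (k : ℕ) : (Multiset.replicate k a).filter P = 0 :=
    Multiset.filter_eq_nil.2 fun b hb => Multiset.eq_of_mem_replicate hb ▸ ha
  simpa [roots_mul (mul_ne_zero hpow hf), roots_mul (mul_ne_zero hpow hg), Multiset.filter_add,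
    Multiset.nsmul_singleton, hrep] using hroots

theorem Matrix.mul_transpose_add_mul_transpose_eq_one {R ι m k : Type*} [CommRing R]
    [Fintype ι] [Fintype m] [Fintype k] [DecidableEq ι] [DecidableEq m] [DecidableEq k]
    (e : ι ≃ m ⊕ k) {X : Matrix ι m R} {Xc : Matrix ι k R}
    (hX : Xᵀ * X = 1) (hXc : Xcᵀ * Xc = 1) (hXXc : Xᵀ * Xc = 0) :
    X * Xᵀ + Xc * Xcᵀ = 1 := by
  have hXcX : Xcᵀ * X = 0 := by simpa using congrArg transpose hXXc
  have h : fromRows Xᵀ Xcᵀ * fromCols X Xc = 1 := by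
    rw [fromRows_mul_fromCols, hX, hXc, hXXc, hXcX, fromBlocks_one]
  simpa [fromCols_mul_fromRows] using (fromCols_mul_fromRows_eq_one_comm e X Xc Xᵀ Xcᵀ).2 h

theorem Matrix.gram_transpose_mul_eq_one_sub {R ι m k l : Type*} [CommRing R]
    [Fintype ι] [Fintype m] [Fintype k] [Fintype l] [DecidableEq ι] [DecidableEq l]
    {X : Matrix ι m R} {Xc : Matrix ι k R} {Y : Matrix ι l R}
    (hsum : X * Xᵀ + Xc * Xcᵀ = 1) (hY : Yᵀ * Y = 1) :
    (Xᵀ * Y)ᵀ * (Xᵀ * Y) = 1 - (Xcᵀ * Y)ᵀ * (Xcᵀ * Y) := by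
  have hproj : X * Xᵀ = 1 - Xc * Xcᵀ := eq_sub_of_add_eq hsum
  calc (Xᵀ * Y)ᵀ * (Xᵀ * Y)
      = Yᵀ * (X * Xᵀ) * Y := by simp only [transpose_mul, transpose_transpose, Matrix.mul_assoc]
    _ = 1 - (Xcᵀ * Y)ᵀ * (Xcᵀ * Y) := by
      rw [hproj, Matrix.mul_sub, Matrix.sub_mul, Matrix.mul_one, hY]
      simp only [transpose_mul, transpose_transpose, Matrix.mul_assoc]

theorem Matrix.IsHermitian.filter_arccos_sqrt_eigenvalues_ne_zero {k : ℕ}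
    {A : Matrix (Fin k) (Fin k) ℝ} (hA : A.IsHermitian) :
    (Finset.univ.val.map fun i => Real.arccos (Real.sqrt (hA.eigenvalues i))).filter (· ≠ 0) =
      (A.charpoly.roots.filter (· < 1)).map fun t => Real.arccos (Real.sqrt t) := by
  rw [hA.roots_charpoly_eq_eigenvalues, RCLike.ofReal_real_eq_id, Function.id_comp,
    Multiset.filter_map, Multiset.filter_map, Multiset.map_map]
  congr 1
  exact Multiset.filter_congr fun i _ => by simp [Real.arccos_eq_zero]

/-- the nonzero canonical angles between two m-dimensional
subspaces X, Y of ℝⁿ (given via matrices whose columns are orthonormal bases)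
coincide, with multiplicity, with the nonzero canonical angles between the
orthogonal complements X⊥ and Y⊥ (given via orthonormal bases of the
complements). Canonical angles are arccos of the singular values of XᵀY,
realized here as arccos of the square roots of the eigenvalues of (XᵀY)ᵀ(XᵀY). -/
theorem stmt_10 (n m : ℕ) (hm : m ≤ n)
    (X Y : Matrix (Fin n) (Fin m) ℝ)
    (Xc Yc : Matrix (Fin n) (Fin (n - m)) ℝ)
    (hX : Xᵀ * X = 1) (hY : Yᵀ * Y = 1)
    (hXc : Xcᵀ * Xc = 1) (hYc : Ycᵀ * Yc = 1)
    (hXXc : Xᵀ * Xc = 0) (hYYc : Yᵀ * Yc = 0)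
    (h1 : ((Xᵀ * Y)ᵀ * (Xᵀ * Y)).IsHermitian)
    (h2 : ((Xcᵀ * Yc)ᵀ * (Xcᵀ * Yc)).IsHermitian) :
    Multiset.filter (fun θ => θ ≠ 0)
        (Finset.univ.val.map fun i : Fin m =>
          Real.arccos (Real.sqrt (h1.eigenvalues i))) =
      Multiset.filter (fun θ => θ ≠ 0)
        (Finset.univ.val.map fun i : Fin (n - m) =>
          Real.arccos (Real.sqrt (h2.eigenvalues i))) := by
  let e : Fin n ≃ Fin m ⊕ Fin (n - m) := (finCongr (by omega)).trans finSumFinEquiv.symm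
  have hXsum := mul_transpose_add_mul_transpose_eq_one e hX hXc hXXc
  have hYsum := mul_transpose_add_mul_transpose_eq_one e hY hYc hYYc
  have hcos : ((Xᵀ * Y)ᵀ * (Xᵀ * Y)).charpoly = (1 - (Xcᵀ * Y)ᵀ * (Xcᵀ * Y)).charpoly := by
    rw [gram_transpose_mul_eq_one_sub hXsum hY]
  have hcos_compl :
      ((Xcᵀ * Yc)ᵀ * (Xcᵀ * Yc)).charpoly = (1 - (Xcᵀ * Y) * (Xcᵀ * Y)ᵀ).charpoly := by
    have h := gram_transpose_mul_eq_one_sub (add_comm (Y * Yᵀ) _ ▸ hYsum) hXc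
    rw [charpoly_mul_comm]
    congr 1
    simpa only [transpose_mul, transpose_transpose, Matrix.mul_assoc] using h
  have hsylvester := charpoly_one_sub_mul_comm' (Xcᵀ * Y)ᵀ (Xcᵀ * Y)
  rw [Fintype.card_fin, Fintype.card_fin, ← map_one C] at hsylvester
  rw [h1.filter_arccos_sqrt_eigenvalues_ne_zero, h2.filter_arccos_sqrt_eigenvalues_ne_zero,
    hcos, hcos_compl, filter_roots_eq_of_X_sub_C_pow_mul_eq (charpoly_monic _).ne_zero
      (charpoly_monic _).ne_zero hsylvester (· < 1) (lt_irrefl 1)]
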